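/- arXiv:2404.19632 — 3 statements merged into one kernel-verified Lean document; each statement's English description precedes it below -/
import Mathlib

section
/- (Quantalic McShane–Whitney extension theorem) Let V be a quantale and (X,d) a V-category. For any subset Y ⊆ X, any non-expansive map f : (Y, d|_Y) → (V, d_V) admits a non-expansive extension f̄ : (X,d) → (V, d_V) with f̄|_Y = f; concretely, f̄(x) = ⊓_{y∈Y} d_V(d(x,y), f(y)) works. -/
variable {V : Type*}

/-- Residuation (internal hom) of a quantale. -/
def dres [CommMonoid V] [CompleteLattice V] (a c : V) : V := sSup {u | u * a ≤ c}

section Residuation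

variable [CommMonoid V] [CompleteLattice V] [IsQuantale V]

theorem le_dres_iff {u a c : V} : u ≤ dres a c ↔ u * a ≤ c :=
  Quantale.leftMulResiduation_le_iff_mul_le

theorem dres_mul_le (a c : V) : dres a c * a ≤ c :=
  le_dres_iff.mp le_rfl

end Residuation

def mcShaneExt [CommMonoid V] [CompleteLattice V] {X : Type*} (d : X → X → V) (Y : Set X)
    (f : Y → V) (x : X) : V :=
  ⨅ y : Y, dres (d x y) (f y)

section McShaneExt

variable [CommMonoid V] [CompleteLattice V] [IsQuantale V] {X : Type*} (d : X → X → V)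
  (Y : Set X) (f : Y → V)

theorem le_dres_mcShaneExt (htrans : ∀ x y z, d x y * d y z ≤ d x z) (x₁ x₂ : X) :
    d x₁ x₂ ≤ dres (mcShaneExt d Y f x₁) (mcShaneExt d Y f x₂) := by
  refine le_dres_iff.mpr (le_iInf fun y => le_dres_iff.mpr ?_)
  calc d x₁ x₂ * mcShaneExt d Y f x₁ * d x₂ y
      ≤ d x₁ x₂ * dres (d x₁ y) (f y) * d x₂ y := by grw [mcShaneExt, iInf_le _ y]
    _ = dres (d x₁ y) (f y) * (d x₁ x₂ * d x₂ y) := by rw [mul_comm (d x₁ x₂), mul_assoc]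
    _ ≤ dres (d x₁ y) (f y) * d x₁ y := by grw [htrans x₁ x₂ y]
    _ ≤ f y := dres_mul_le _ _

theorem mcShaneExt_le (hrefl : ∀ x, (1 : V) ≤ d x x) (y : Y) : mcShaneExt d Y f y ≤ f y :=
  calc mcShaneExt d Y f y ≤ dres (d y y) (f y) := iInf_le _ y
    _ = dres (d y y) (f y) * 1 := (mul_one _).symm
    _ ≤ dres (d y y) (f y) * d y y := by grw [hrefl y]
    _ ≤ f y := dres_mul_le _ _

theorem le_mcShaneExt (hf : ∀ y₁ y₂ : Y, d y₁ y₂ ≤ dres (f y₁) (f y₂)) (y : Y) :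
    f y ≤ mcShaneExt d Y f y :=
  le_iInf fun y' => le_dres_iff.mpr <| by
    rw [mul_comm]
    exact le_dres_iff.mp (hf y y')

end McShaneExt

/-- Quantalic McShane–Whitney extension theorem. -/
theorem stmt9 [CommMonoid V] [CompleteLattice V] [IsQuantale V]
    {X : Type*} (d : X → X → V)
    (hrefl : ∀ x, (1 : V) ≤ d x x)
    (htrans : ∀ x y z, d x y * d y z ≤ d x z)
    (Y : Set X) (f : Y → V)
    (hf : ∀ y₁ y₂ : Y, d (↑y₁) (↑y₂) ≤ dres (f y₁) (f y₂)) :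
    (∀ x₁ x₂ : X,
        d x₁ x₂ ≤ dres (⨅ y : Y, dres (d x₁ ↑y) (f y)) (⨅ y : Y, dres (d x₂ ↑y) (f y))) ∧
    (∀ y : Y, (⨅ y' : Y, dres (d (↑y) ↑y') (f y')) = f y) :=
  ⟨le_dres_mcShaneExt d Y f htrans,
    fun y => (mcShaneExt_le d Y f hrefl y).antisymm (le_mcShaneExt d Y f hf y)⟩
end

section
/- The function g(x) = ⊔_{y∈Y} f(y) ⊗ d(y,x) is the smallest non-expansive extension of f to X. -/
/-!
Non-expansiveness of `h : X → V` says `h x₁ ⊗ d x₁ x₂ ≤ h x₂`. Every `f y ⊗ d y -` is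
non-expansive by transitivity of `d`, hence so is their supremum `g`. Any non-expansive `h`
extending `f` dominates each `f y ⊗ d y x = h y ⊗ d y x ≤ h x`, hence dominates `g`; applied to
`f` itself on `Y` this gives `g ≤ f` on `Y`, while reflexivity `1 ≤ d y y` gives `f ≤ g` there.
-/

variable {V : Type*}

def IsNonexpansive [CommMonoid V] [CompleteLattice V] {X : Type*} (d : X → X → V) (h : X → V) :
    Prop :=
  ∀ x₁ x₂, d x₁ x₂ ≤ dres (h x₁) (h x₂)

section Quantale

variable [CommMonoid V] [CompleteLattice V] [IsQuantale V]

variable {X ι : Type*} {d : X → X → V}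

theorem isNonexpansive_iff {h : X → V} : IsNonexpansive d h ↔ ∀ x₁ x₂, h x₁ * d x₁ x₂ ≤ h x₂ := by
  simp only [IsNonexpansive, le_dres_iff, mul_comm]

theorem isNonexpansive_iSup_mul (htrans : ∀ x y z, d x y * d y z ≤ d x z) (a : ι → V)
    (p : ι → X) : IsNonexpansive d (fun x ↦ ⨆ i, a i * d (p i) x) := by
  refine isNonexpansive_iff.2 fun x₁ x₂ ↦ ?_
  rw [Quantale.iSup_mul_distrib]
  refine iSup_le fun i ↦ ?_
  calc a i * d (p i) x₁ * d x₁ x₂ = a i * (d (p i) x₁ * d x₁ x₂) := mul_assoc _ _ _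
    _ ≤ a i * d (p i) x₂ := mul_le_mul_right (htrans _ _ _) _
    _ ≤ ⨆ j, a j * d (p j) x₂ := le_iSup (fun j ↦ a j * d (p j) x₂) i

theorem iSup_mul_le_of_isNonexpansive {h : X → V} (hh : IsNonexpansive d h) {a : ι → V}
    {p : ι → X} (ha : ∀ i, a i ≤ h (p i)) (x : X) : ⨆ i, a i * d (p i) x ≤ h x :=
  iSup_le fun i ↦ (mul_le_mul_left (ha i) _).trans (isNonexpansive_iff.1 hh (p i) x)

theorem le_iSup_mul_apply_self (hrefl : ∀ x, (1 : V) ≤ d x x) (a : ι → V) (p : ι → X) (j : ι) :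
    a j ≤ ⨆ i, a i * d (p i) (p j) :=
  calc a j = a j * 1 := (mul_one _).symm
    _ ≤ a j * d (p j) (p j) := mul_le_mul_right (hrefl _) _
    _ ≤ ⨆ i, a i * d (p i) (p j) := le_iSup (fun i ↦ a i * d (p i) (p j)) j

end Quantale

/-- The function `g x = ⨆ y ∈ Y, f y ⊗ d y x` is the smallest non-expansive extension. -/
theorem stmt11 [CommMonoid V] [CompleteLattice V] [IsQuantale V]
    {X : Type*} (d : X → X → V)
    (hrefl : ∀ x, (1 : V) ≤ d x x)
    (htrans : ∀ x y z, d x y * d y z ≤ d x z)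
    (Y : Set X) (f : Y → V)
    (hf : ∀ y₁ y₂ : Y, d (↑y₁) (↑y₂) ≤ dres (f y₁) (f y₂)) :
    (∀ x₁ x₂, d x₁ x₂ ≤ dres (⨆ y : Y, f y * d (↑y) x₁) (⨆ y : Y, f y * d (↑y) x₂)) ∧
    (∀ y : Y, (⨆ y' : Y, f y' * d (↑y') ↑y) = f y) ∧
    (∀ h : X → V, (∀ x₁ x₂, d x₁ x₂ ≤ dres (h x₁) (h x₂)) → (∀ y : Y, h ↑y = f y) →
      ∀ x, (⨆ y : Y, f y * d (↑y) x) ≤ h x) := by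
  refine ⟨isNonexpansive_iSup_mul htrans f Subtype.val, fun y ↦ ?_, fun h hh hext ↦ ?_⟩
  · exact le_antisymm
      (iSup_mul_le_of_isNonexpansive (d := fun y₁ y₂ : Y ↦ d y₁ y₂) hf (p := id)
        (fun _ ↦ le_rfl) y)
      (le_iSup_mul_apply_self hrefl f Subtype.val y)
  · exact iSup_mul_le_of_isNonexpansive hh fun y ↦ (hext y).ge
end

section
/- Compositionality fails for the Kantorovich lifting of P∘D with evaluation map sup∘P(E): on the two-element set X = {x,y} with the discrete metric d (d(x,y)=d(y,x)=1, d(x,x)=d(y,y)=0) valued in the quantale ([0,1], ≥, truncated addition), for U = {δ_x, δ_y} and V = {δ_x, ½δ_x+½δ_y, δ_y} ⊆ D(X), the composite Kantorovich lifting gives K_{sup}(K_{E}(d))(U,V) ≥ ½, while the single-step Kantorovich lifting with the composed evaluation map gives K_{sup∗E}(d)(U,V) = 0. -/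
open Set

noncomputable section

/-- Residuation (truncated subtraction) of the quantale `[0,1]` with reversed order:
`tsubR a b = max (b - a) 0`. -/
def tsubR (a b : ℝ) : ℝ := max (b - a) 0

/-- Distributions on the two-element set `Bool`. -/
def DistB := {μ : Bool → ℝ // (∀ b, 0 ≤ μ b) ∧ μ true + μ false = 1}

/-- Expected value of `g` under `μ`. -/
def expectB (μ : DistB) (g : Bool → ℝ) : ℝ := μ.1 true * g true + μ.1 false * g false

/-- Discrete metric on `Bool`. -/
def dDisc (b₁ b₂ : Bool) : ℝ := if b₁ = b₂ then 0 else 1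

/-- `g : Bool → [0,1]` is non-expansive from `(Bool, d)` into `([0,1], tsubR)`
(recall the order of the quantale `[0,1]` is reversed). -/
def nonexpB (d : Bool → Bool → ℝ) (g : Bool → ℝ) : Prop :=
  (∀ b, g b ∈ Icc (0 : ℝ) 1) ∧ ∀ b₁ b₂, tsubR (g b₁) (g b₂) ≤ d b₁ b₂

/-- Kantorovich lifting of the distribution functor with evaluation map `E`
(expected value), applied to a metric `d` on `Bool`. Infimum in the reversed
order is the supremum of the reals. -/
def KE (d : Bool → Bool → ℝ) (μ ν : DistB) : ℝ :=
  sSup {e | ∃ g : Bool → ℝ, nonexpB d g ∧ e = tsubR (expectB μ g) (expectB ν g)}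

/-- Kantorovich lifting of the powerset functor with evaluation map `sup`,
applied to a metric `dD` on `DistB`. -/
def Ksup (dD : DistB → DistB → ℝ) (U W : Set DistB) : ℝ :=
  sSup {e | ∃ h : DistB → ℝ, (∀ μ, h μ ∈ Icc (0 : ℝ) 1) ∧
      (∀ μ ν, tsubR (h μ) (h ν) ≤ dD μ ν) ∧
      e = tsubR (sSup (h '' U)) (sSup (h '' W))}

/-- Single-step Kantorovich lifting of `P ∘ D` with the composed evaluation map
`sup ∗ E = sup ∘ P(E)`. -/
def KsupE (d : Bool → Bool → ℝ) (U W : Set DistB) : ℝ :=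
  sSup {e | ∃ g : Bool → ℝ, nonexpB d g ∧
      e = tsubR (sSup ((fun μ => expectB μ g) '' U)) (sSup ((fun μ => expectB μ g) '' W))}

/-- Dirac distribution. -/
def dirac (b : Bool) : DistB :=
  ⟨fun b' => if b' = b then 1 else 0, by
    refine ⟨fun b' => ?_, ?_⟩
    · dsimp only; split <;> norm_num
    · cases b <;> simp⟩

/-- The uniform distribution `½·x + ½·y`. -/
def halfhalf : DistB := ⟨fun _ => 1 / 2, ⟨fun _ => by norm_num, by norm_num⟩⟩

/-!
A single evaluation `sup ∘ P(E)` only sees the largest expectation in a set, and the expectation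
of `g` under any distribution is at most `max (g x) (g y)`, which is already attained by a Dirac
in `U`; hence the single-step lifting vanishes. The two-step lifting may instead evaluate
distributions by a function that is nonexpansive for `K_E(d)`, such as the smaller of the two
masses: it vanishes on Diracs but is `½` on `½δ_x + ½δ_y`.
-/

lemma tsubR_nonneg (a b : ℝ) : 0 ≤ tsubR a b := le_max_right _ _

lemma tsubR_le_one {a b : ℝ} (ha : 0 ≤ a) (hb : b ≤ 1) : tsubR a b ≤ 1 :=
  max_le (by linarith) zero_le_one

lemma tsubR_eq_zero {a b : ℝ} (h : b ≤ a) : tsubR a b = 0 :=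
  max_eq_right (by linarith)

lemma tsubR_min_min_le (a b c d : ℝ) :
    tsubR (min a b) (min c d) ≤ max (tsubR a c) (tsubR b d) := by
  unfold tsubR
  grind

lemma Real.sSup_image_mem_Icc {α : Type*} {f : α → ℝ} (hf : ∀ x, f x ∈ Icc (0 : ℝ) 1)
    (s : Set α) : sSup (f '' s) ∈ Icc (0 : ℝ) 1 :=
  ⟨Real.sSup_nonneg (by rintro _ ⟨x, -, rfl⟩; exact (hf x).1),
    Real.sSup_le (by rintro _ ⟨x, -, rfl⟩; exact (hf x).2) zero_le_one⟩

lemma DistB.mem_Icc (μ : DistB) (b : Bool) : μ.1 b ∈ Icc (0 : ℝ) 1 := by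
  obtain ⟨hnonneg, hsum⟩ := μ.2
  have := hnonneg true
  have := hnonneg false
  cases b <;> constructor <;> linarith

lemma expectB_le_max (μ : DistB) (g : Bool → ℝ) : expectB μ g ≤ max (g true) (g false) := by
  obtain ⟨hnonneg, hsum⟩ := μ.2
  calc expectB μ g ≤ μ.1 true * max (g true) (g false) + μ.1 false * max (g true) (g false) := by
        unfold expectB
        gcongr
        exacts [hnonneg true, le_max_left _ _, hnonneg false, le_max_right _ _]
    _ = max (g true) (g false) := by rw [← add_mul, hsum, one_mul]

lemma expectB_mem_Icc (μ : DistB) {g : Bool → ℝ} (hg : ∀ b, g b ∈ Icc (0 : ℝ) 1) :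
    expectB μ g ∈ Icc (0 : ℝ) 1 :=
  ⟨add_nonneg (mul_nonneg (μ.2.1 true) (hg true).1) (mul_nonneg (μ.2.1 false) (hg false).1),
    (expectB_le_max μ g).trans (max_le (hg true).2 (hg false).2)⟩

lemma expectB_dirac (b : Bool) (g : Bool → ℝ) : expectB (dirac b) g = g b := by
  cases b <;> simp [expectB, dirac]

lemma expectB_dirac_right (μ : DistB) (b : Bool) : expectB μ (dirac b).1 = μ.1 b := by
  cases b <;> simp [expectB, dirac]

lemma nonexpB_dDisc_iff {g : Bool → ℝ} : nonexpB dDisc g ↔ ∀ b, g b ∈ Icc (0 : ℝ) 1 := by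
  refine ⟨And.left, fun hg => ⟨hg, fun b₁ b₂ => ?_⟩⟩
  unfold dDisc
  split_ifs with h
  · rw [h, tsubR_eq_zero le_rfl]
  · exact tsubR_le_one (hg b₁).1 (hg b₂).2

lemma le_KE {d : Bool → Bool → ℝ} {g : Bool → ℝ} (hg : nonexpB d g) (μ ν : DistB) :
    tsubR (expectB μ g) (expectB ν g) ≤ KE d μ ν := by
  refine le_csSup ⟨1, ?_⟩ ⟨g, hg, rfl⟩
  rintro _ ⟨g', hg', rfl⟩
  exact tsubR_le_one (expectB_mem_Icc μ hg'.1).1 (expectB_mem_Icc ν hg'.1).2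

lemma le_Ksup {dD : DistB → DistB → ℝ} {h : DistB → ℝ} (hmem : ∀ μ, h μ ∈ Icc (0 : ℝ) 1)
    (hnonexp : ∀ μ ν, tsubR (h μ) (h ν) ≤ dD μ ν) (U W : Set DistB) :
    tsubR (sSup (h '' U)) (sSup (h '' W)) ≤ Ksup dD U W := by
  refine le_csSup ⟨1, ?_⟩ ⟨h, hmem, hnonexp, rfl⟩
  rintro _ ⟨h', hmem', -, rfl⟩
  exact tsubR_le_one (Real.sSup_image_mem_Icc hmem' U).1 (Real.sSup_image_mem_Icc hmem' W).2

lemma tsubR_apply_le_KE_dDisc (μ ν : DistB) (b : Bool) :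
    tsubR (μ.1 b) (ν.1 b) ≤ KE dDisc μ ν := by
  simpa only [expectB_dirac_right] using le_KE (nonexpB_dDisc_iff.2 (dirac b).mem_Icc) μ ν

def minMass (μ : DistB) : ℝ := min (μ.1 true) (μ.1 false)

lemma minMass_mem_Icc (μ : DistB) : minMass μ ∈ Icc (0 : ℝ) 1 :=
  ⟨le_min (μ.mem_Icc true).1 (μ.mem_Icc false).1, min_le_of_left_le (μ.mem_Icc true).2⟩

lemma tsubR_minMass_le_KE_dDisc (μ ν : DistB) : tsubR (minMass μ) (minMass ν) ≤ KE dDisc μ ν :=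
  (tsubR_min_min_le _ _ _ _).trans
    (max_le (tsubR_apply_le_KE_dDisc μ ν true) (tsubR_apply_le_KE_dDisc μ ν false))

lemma minMass_dirac (b : Bool) : minMass (dirac b) = 0 := by
  cases b <;> simp [minMass, dirac]

lemma minMass_halfhalf : minMass halfhalf = 1 / 2 := by
  simp [minMass, halfhalf]

lemma KsupE_dirac_pair_eq_zero (d : Bool → Bool → ℝ) (W : Set DistB) :
    KsupE d {dirac true, dirac false} W = 0 := by
  refine le_antisymm (Real.sSup_nonpos ?_) (Real.sSup_nonneg ?_) <;> rintro _ ⟨g, hg, rfl⟩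
  · rw [image_pair, expectB_dirac, expectB_dirac, csSup_pair]
    refine (tsubR_eq_zero (Real.sSup_le ?_ (le_sup_of_le_left (hg.1 true).1))).le
    rintro _ ⟨μ, -, rfl⟩
    exact expectB_le_max μ g
  · exact tsubR_nonneg _ _

/-- Failure of compositionality for `P ∘ D` with evaluation maps `sup` and `E`:
with `U = {δ_x, δ_y}` and `V = {δ_x, ½x+½y, δ_y}`, the composite lifting gives
distance at least `½`, while the lifting along the composed evaluation map gives `0`. -/
theorem stmt19 :
    (1 / 2 : ℝ) ≤
        Ksup (KE dDisc) {dirac true, dirac false} {dirac true, halfhalf, dirac false} ∧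
    KsupE dDisc {dirac true, dirac false} {dirac true, halfhalf, dirac false} = 0 := by
  refine ⟨?_, KsupE_dirac_pair_eq_zero dDisc _⟩
  have hU : minMass '' {dirac true, dirac false} = {0} := by
    rw [image_pair, minMass_dirac, minMass_dirac, pair_eq_singleton]
  have hV : minMass '' {dirac true, halfhalf, dirac false} = {0, 1 / 2} := by
    rw [image_insert_eq, image_pair, minMass_dirac, minMass_dirac, minMass_halfhalf,
      insert_comm, pair_eq_singleton, pair_comm]
  calc (1 / 2 : ℝ) = tsubR (sSup (minMass '' {dirac true, dirac false}))
        (sSup (minMass '' {dirac true, halfhalf, dirac false})) := by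
        rw [hU, hV, csSup_singleton, csSup_pair, tsubR]
        norm_num
    _ ≤ _ := le_Ksup minMass_mem_Icc tsubR_minMass_le_KE_dDisc _ _
end
end
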